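/- arXiv:1903.12556 — 2 statements merged into one kernel-verified Lean document; each statement's English description precedes it below -/
import Mathlib

section
/- Teleportation-with-operation identity: let |y⟩ ∈ C^2 ⊗ C^2 and let |z⟩ = |y⟩ ⊗ |Φ⟩ on systems H₀⊗H₁⊗H₂⊗H₃. For any a,b,c,d ∈ Z_2, the partially-projected vector 2·(I_{H₀} ⊗ [⟨Φ|(I_{H₁} ⊗ W(a,b))†] ⊗ W(c,d))|z⟩ equals (-1)^{ad} (I ⊗ W(a+c, b+d))|y⟩. -/
open Matrix Kronecker

/-- The qubit bit-flip Pauli operator `X = Σ_i |i+1⟩⟨i|` (indices mod 2). -/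
noncomputable def PauliX : Matrix (ZMod 2) (ZMod 2) ℂ :=
  fun i j => if i = j + 1 then 1 else 0

/-- The qubit phase-flip Pauli operator `Z = Σ_i (-1)^i |i⟩⟨i|`. -/
noncomputable def PauliZ : Matrix (ZMod 2) (ZMod 2) ℂ :=
  fun i j => if i = j then (-1 : ℂ) ^ (i.val) else 0

/-- `W(a,b) = X^a Z^b` for `a, b ∈ ℤ₂`. -/
noncomputable def PauliW (a b : ZMod 2) : Matrix (ZMod 2) (ZMod 2) ℂ :=
  PauliX ^ a.val * PauliZ ^ b.val

/-- The maximally entangled state `|Φ⟩ = (1/√2)(|00⟩+|11⟩)` on two qubits. -/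
noncomputable def Phi : ZMod 2 × ZMod 2 → ℂ :=
  fun p => if p.1 = p.2 then ((Real.sqrt 2 : ℂ))⁻¹ else 0
/-- The Bell basis vector `(I ⊗ W(a,b))|Φ⟩`. -/
noncomputable def bell (a b : ZMod 2) : ZMod 2 × ZMod 2 → ℂ :=
  ((1 : Matrix (ZMod 2) (ZMod 2) ℂ) ⊗ₖ PauliW a b).mulVec Phi

lemma sum2' (f : ZMod 2 → ℂ) : ∑ i, f i = f 0 + f 1 := Fin.sum_univ_two f

lemma zmod2_cases' (x : ZMod 2) : x = 0 ∨ x = 1 := by revert x; decide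

lemma W_apply' (a b i j : ZMod 2) :
    PauliW a b i j = if i = j + a then (-1:ℂ)^(j.val * b.val) else 0 := by
  have h1 : (1 : ZMod 2).val = 1 := rfl
  rcases zmod2_cases' a with rfl | rfl <;> rcases zmod2_cases' b with rfl | rfl <;>
    rcases zmod2_cases' i with rfl | rfl <;> rcases zmod2_cases' j with rfl | rfl <;>
    simp [PauliW, PauliX, PauliZ, Matrix.mul_apply, sum2', h1,
      show (1+1 : ZMod 2) = 0 from rfl, show (0 : ZMod 2) ≠ 1 from by decide]

lemma bell_apply' (a b j k : ZMod 2) :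
    bell a b (j, k) = if k = j + a then (-1:ℂ)^(j.val * b.val) * ((Real.sqrt 2 : ℂ))⁻¹ else 0 := by
  simp only [bell, Matrix.mulVec, dotProduct, Fintype.sum_prod_type, sum2',
    Matrix.kroneckerMap_apply, Matrix.one_apply, W_apply', Phi]
  rcases zmod2_cases' j with rfl | rfl <;> rcases zmod2_cases' k with rfl | rfl <;>
    simp [show (0 : ZMod 2) ≠ 1 from by decide, show (1 : ZMod 2) ≠ 0 from by decide]

set_option maxHeartbeats 2000000 in
/-- Teleportation-with-operation: starting from `|z⟩ = |y⟩ ⊗ |Φ⟩` on `H₀⊗H₁⊗H₂⊗H₃`,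
applying `W(c,d)` on `H₃` and projecting `H₁⊗H₂` onto the Bell vector
`(I ⊗ W(a,b))|Φ⟩` yields (after normalization by 2) the vector
`(-1)^{ad} (I ⊗ W(a+c,b+d))|y⟩` on `H₀⊗H₃`. -/
theorem teleportation_with_operation (a b c d : ZMod 2) (y : ZMod 2 × ZMod 2 → ℂ) :
    (fun p : ZMod 2 × ZMod 2 =>
        2 * ∑ j : ZMod 2, ∑ k : ZMod 2, ∑ l : ZMod 2,
          (starRingEnd ℂ) (bell a b (j, k)) * PauliW c d p.2 l * (y (p.1, j) * Phi (k, l)))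
      = ((-1 : ℂ) ^ (a.val * d.val)) •
          ((1 : Matrix (ZMod 2) (ZMod 2) ℂ) ⊗ₖ PauliW (a + c) (b + d)).mulVec y := by
  have hs2 : ((Real.sqrt 2 : ℂ))⁻¹ ^ 2 = 2⁻¹ := by
    rw [sq, ← mul_inv, ← Complex.ofReal_mul, Real.mul_self_sqrt (by norm_num)]
    norm_num
  funext p
  obtain ⟨p1, p2⟩ := p
  simp only [bell_apply', Phi, Matrix.mulVec, dotProduct, Fintype.sum_prod_type, sum2',
    Matrix.kroneckerMap_apply, Matrix.one_apply, W_apply', Pi.smul_apply, smul_eq_mul]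
  rcases zmod2_cases' a with rfl | rfl <;> rcases zmod2_cases' b with rfl | rfl <;>
    rcases zmod2_cases' c with rfl | rfl <;> rcases zmod2_cases' d with rfl | rfl <;>
    rcases zmod2_cases' p1 with rfl | rfl <;> rcases zmod2_cases' p2 with rfl | rfl <;>
    · norm_num [show (0 : ZMod 2) ≠ 1 from by decide, show (1 : ZMod 2) ≠ 0 from by decide,
        show (2 : ZMod 2) = 0 from rfl, show (3 : ZMod 2) = 1 from rfl,
        show (1+1 : ZMod 2) = 0 from rfl, show (1 : ZMod 2).val = 1 from rfl,
        show ZMod.val (0 : ZMod 2) = 0 from rfl,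
        map_inv₀, Complex.conj_ofReal]
      all_goals try simp only [show ((2:ZMod 2)) = 0 from rfl, show ((3:ZMod 2)) = 1 from rfl,
        show ZMod.val (0 : ZMod 2) = 0 from rfl]
      all_goals try norm_num [show ¬((1:ZMod 2) = 0) from by decide, show ¬((0:ZMod 2) = 1) from by decide,
        map_inv₀, Complex.conj_ofReal]
      all_goals try ring_nf
      all_goals try simp only [hs2]
      all_goals ring
end

section
/- Converse bound for the (N-1)-private QSPIR: let ρ_{w,z} be density matrices on H = H_t ⊗ H_t' indexed by a file value w ∈ {0,…,L-1} and side information z, such that the reduced state of ρ_{w,z} on H_t' equals a state ρ'_z independent of w. If a POVM decoder recovers w with average error probability P_err, then for every r ∈ (0,1), (1 - P_err)^{1+r} L^r ≤ d_t^{2r}, where d_t = dim H_t. In particular, if d_t² / L → 0 along a sequence of protocols, then the success probability 1 - P_err tends to 0. -/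
open Matrix ComplexOrder

namespace QSPIRAux

variable {n : Type*} [Fintype n] [DecidableEq n]

lemma psd_trace_nonneg {A : Matrix n n ℂ} (hA : A.PosSemidef) : 0 ≤ A.trace := by
  rw [Matrix.trace]
  refine Finset.sum_nonneg fun i _ => ?_
  have h := hA.dotProduct_mulVec_nonneg (Pi.single i 1)
  simpa [dotProduct, Matrix.mulVec, Pi.single_apply, Finset.sum_ite_eq,
    Finset.sum_ite_eq', Matrix.diag, mul_ite, ite_mul] using h

lemma psd_sum {ι : Type*} (s : Finset ι) (f : ι → Matrix n n ℂ)
    (h : ∀ i ∈ s, (f i).PosSemidef) : (∑ i ∈ s, f i).PosSemidef := by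
  classical
  induction s using Finset.induction with
  | empty => simpa using (Matrix.PosSemidef.zero (n := n) (R := ℂ))
  | insert _ _ hx ih =>
    rw [Finset.sum_insert hx]
    exact (h _ (Finset.mem_insert_self _ _)).add
      (ih fun i hi => h i (Finset.mem_insert_of_mem hi))

lemma trace_mul_nonneg {A B : Matrix n n ℂ} (hA : A.PosSemidef) (hB : B.PosSemidef) :
    0 ≤ (A * B).trace := by
  obtain ⟨C, rfl⟩ := (by open scoped MatrixOrder in exact CStarAlgebra.nonneg_iff_eq_star_mul_self.mp hA.nonneg : ∃ C : Matrix n n ℂ, A = star C * C)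
  rw [Matrix.mul_assoc, Matrix.trace_mul_comm]
  exact psd_trace_nonneg (hB.mul_mul_conjTranspose_same C)

lemma trace_mul_le {A B C : Matrix n n ℂ} (h : (B - A).PosSemidef) (hC : C.PosSemidef) :
    (A * C).trace ≤ (B * C).trace := by
  have h2 := trace_mul_nonneg h hC
  rw [Matrix.sub_mul, Matrix.trace_sub] at h2
  exact sub_nonneg.mp h2

lemma half_le {x y : ℂ} (h : x + x ≤ y + y) : x ≤ y := by
  rw [Complex.le_def] at h ⊢
  simp only [Complex.add_re, Complex.add_im] at h
  exact ⟨by linarith [h.1], by linarith [h.2.le, h.2.ge]⟩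

lemma uform {a b : ℕ} (M : Matrix (Fin a × Fin b) (Fin a × Fin b) ℂ)
    (v : Fin a × Fin b → ℂ) (k m k' m' : Fin a) :
    dotProduct (star (fun p : Fin a × Fin b => if p.1 = m then v (k, p.2) else 0))
      (M *ᵥ (fun p : Fin a × Fin b => if p.1 = m' then v (k', p.2) else 0))
    = ∑ i, ∑ j, (starRingEnd ℂ) (v (k, i)) * (M (m, i) (m', j) * v (k', j)) := by
  simp only [dotProduct, Matrix.mulVec, Pi.star_apply, Fintype.sum_prod_type]
  rw [Finset.sum_eq_single m]
  · refine Finset.sum_congr rfl fun i _ => ?_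
    simp only [if_pos rfl]
    rw [Finset.sum_eq_single m']
    · simp [Finset.mul_sum]
    · intro x _ hx
      simp [hx]
    · simp
  · intro x _ hx
    simp [hx]
  · simp

lemma pinch {a b : ℕ} {M : Matrix (Fin a × Fin b) (Fin a × Fin b) ℂ} (hM : M.PosSemidef) :
    ((Matrix.of fun p q : Fin a × Fin b =>
        if p.1 = q.1 then (a : ℂ) * ∑ k, M (k, p.2) (k, q.2) else 0) - M).PosSemidef := by
  set T : Matrix (Fin a × Fin b) (Fin a × Fin b) ℂ :=
    Matrix.of fun p q : Fin a × Fin b =>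
      if p.1 = q.1 then (a : ℂ) * ∑ k, M (k, p.2) (k, q.2) else 0 with hTdef
  have hTherm : T.IsHermitian := by
    ext p q
    simp only [hTdef, Matrix.conjTranspose_apply, Matrix.of_apply]
    by_cases h : p.1 = q.1
    · rw [if_pos h.symm, if_pos h]
      simp only [star_mul', star_sum, star_natCast]
      congr 1
      exact Finset.sum_congr rfl fun k _ => hM.1.apply _ _
    · rw [if_neg (fun h' => h h'.symm), if_neg h, star_zero]
  refine .of_dotProduct_mulVec_nonneg (hTherm.sub hM.1) fun v => ?_
  rw [Matrix.sub_mulVec, dotProduct_sub, sub_nonneg]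
  set u : Fin a → Fin a → (Fin a × Fin b → ℂ) :=
    fun k m => (fun p : Fin a × Fin b => if p.1 = m then v (k, p.2) else 0) with hu
  set B : Fin a → Fin a → ℂ :=
    fun k m => ∑ i, ∑ j, (starRingEnd ℂ) (v (k, i)) * (M (k, i) (m, j) * v (m, j)) with hB
  set Q : Fin a → Fin a → ℂ :=
    fun k m => ∑ i, ∑ j, (starRingEnd ℂ) (v (k, i)) * (M (m, i) (m, j) * v (k, j)) with hQ
  have hQnn : ∀ k m, 0 ≤ Q k m := by
    intro k m
    have h := hM.dotProduct_mulVec_nonneg (u k m)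
    rwa [hu, uform M v k m k m] at h
  have hMexp : dotProduct (star v) (M *ᵥ v) = ∑ k, ∑ m, B k m := by
    have h1 : dotProduct (star v) (M *ᵥ v)
        = ∑ k, ∑ i, ∑ m, ∑ j,
            (starRingEnd ℂ) (v (k, i)) * (M (k, i) (m, j) * v (m, j)) := by
      simp [dotProduct, Matrix.mulVec, Fintype.sum_prod_type, Finset.mul_sum]
    rw [h1]
    exact Finset.sum_congr rfl fun k _ => Finset.sum_comm
  have hTexp : dotProduct (star v) (T *ᵥ v) = (a : ℂ) * ∑ k, ∑ m, Q k m := by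
    have h1 : dotProduct (star v) (T *ᵥ v)
        = ∑ k, ∑ i, (starRingEnd ℂ) (v (k, i)) *
            ∑ j, ((a : ℂ) * ∑ m, M (m, i) (m, j)) * v (k, j) := by
      simp only [dotProduct, Matrix.mulVec, Pi.star_apply, Fintype.sum_prod_type, hTdef,
        Matrix.of_apply]
      refine Finset.sum_congr rfl fun k _ => Finset.sum_congr rfl fun i _ => ?_
      congr 1
      rw [Finset.sum_eq_single k]
      · simp
      · intro x _ hx
        simp [Ne.symm hx]
      · simp
    rw [h1, Finset.mul_sum]
    refine Finset.sum_congr rfl fun k _ => ?_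
    calc ∑ i, (starRingEnd ℂ) (v (k, i)) *
            ∑ j, ((a : ℂ) * ∑ m, M (m, i) (m, j)) * v (k, j)
        = ∑ i, ∑ j, ∑ m, (a : ℂ) *
            ((starRingEnd ℂ) (v (k, i)) * (M (m, i) (m, j) * v (k, j))) := by
          refine Finset.sum_congr rfl fun i _ => ?_
          simp only [Finset.mul_sum, Finset.sum_mul]
          refine Finset.sum_congr rfl fun j _ => Finset.sum_congr rfl fun m _ => ?_
          ring
      _ = ∑ i, ∑ m, ∑ j, (a : ℂ) *
            ((starRingEnd ℂ) (v (k, i)) * (M (m, i) (m, j) * v (k, j))) :=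
          Finset.sum_congr rfl fun i _ => Finset.sum_comm
      _ = ∑ m, ∑ i, ∑ j, (a : ℂ) *
            ((starRingEnd ℂ) (v (k, i)) * (M (m, i) (m, j) * v (k, j))) :=
          Finset.sum_comm
      _ = (a : ℂ) * ∑ m, Q k m := by
          rw [Finset.mul_sum]
          refine Finset.sum_congr rfl fun m _ => ?_
          rw [hQ]
          simp only [Finset.mul_sum]
  rw [hMexp, hTexp]
  have hCS : ∀ k m, B k m + B m k ≤ B k k + B m m := by
    intro k m
    have h0 := hM.dotProduct_mulVec_nonneg (u k k - u m m)
    rw [star_sub, Matrix.mulVec_sub, sub_dotProduct, dotProduct_sub,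
      dotProduct_sub] at h0
    rw [hu] at h0
    simp only at h0
    rw [uform M v k k k k, uform M v k k m m, uform M v m m k k, uform M v m m m m] at h0
    rw [← sub_nonneg]
    calc (0 : ℂ) ≤ _ := h0
      _ = B k k + B m m - (B k m + B m k) := by rw [hB]; ring
  have hswap : (∑ k, ∑ m, B k m) = ∑ k, ∑ m, B m k := Finset.sum_comm
  have hdouble : (∑ k, ∑ m, B k m) + (∑ k, ∑ m, B k m) ≤
      ((a : ℂ) * ∑ k, B k k) + ((a : ℂ) * ∑ k, B k k) := by
    calc (∑ k, ∑ m, B k m) + (∑ k, ∑ m, B k m)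
        = (∑ k, ∑ m, B k m) + (∑ k, ∑ m, B m k) := by rw [← hswap]
      _ = ∑ k, ((∑ m, B k m) + (∑ m, B m k)) := Finset.sum_add_distrib.symm
      _ = ∑ k, ∑ m, (B k m + B m k) :=
          Finset.sum_congr rfl fun k _ => Finset.sum_add_distrib.symm
      _ ≤ ∑ k, ∑ m, (B k k + B m m) :=
          Finset.sum_le_sum fun k _ => Finset.sum_le_sum fun m _ => hCS k m
      _ = (∑ k, ∑ _m : Fin a, B k k) + (∑ k, ∑ m : Fin a, B m m) := by
          rw [← Finset.sum_add_distrib]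
          exact Finset.sum_congr rfl fun k _ => Finset.sum_add_distrib
      _ = ((a : ℂ) * ∑ k, B k k) + ((a : ℂ) * ∑ k, B k k) := by
          congr 1
          · simp [Finset.sum_const, Finset.mul_sum, nsmul_eq_mul]
          · rw [Finset.sum_comm]
            simp [Finset.sum_const, Finset.mul_sum, nsmul_eq_mul]
  have hmid : (∑ k, ∑ m, B k m) ≤ (a : ℂ) * ∑ k, B k k := half_le hdouble
  have hdiag : ∀ k : Fin a, B k k = Q k k := fun k => rfl
  have hlast : (∑ k, B k k) ≤ ∑ k, ∑ m, Q k m := by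
    refine Finset.sum_le_sum fun k _ => ?_
    rw [hdiag k]
    exact Finset.single_le_sum (fun m _ => hQnn k m) (Finset.mem_univ k)
  exact hmid.trans (mul_le_mul_of_nonneg_left hlast (by positivity))

end QSPIRAux

open QSPIRAux

/-- Converse bound for `(N-1)`-private QSPIR: states `ρ_{w,z}` on `H_t ⊗ H_t'`
whose reduced state on the colluding servers' system `H_t'` does not depend on
the file value `w` (perfect user and server secrecy), decoded by POVMs `Y_z`
with average error probability `P_err`, satisfy
`(1 - P_err)^{1+r} L^r ≤ d_t^{2r}` for every `r ∈ (0,1)`. -/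
theorem qspir_converse_bound
    (dt dt' L : ℕ) (hdt : 0 < dt) (hdt' : 0 < dt') (hL : 0 < L)
    (Z : Type*) [Fintype Z] (q : Z → ℝ) (hq : ∀ z, 0 ≤ q z) (hqsum : ∑ z, q z = 1)
    (ρ : Fin L → Z → Matrix (Fin dt × Fin dt') (Fin dt × Fin dt') ℂ)
    (hρ : ∀ w z, (ρ w z).PosSemidef ∧ (ρ w z).trace = 1)
    (hsec : ∀ w w' z, (fun i j : Fin dt' => ∑ k : Fin dt, ρ w z (k, i) (k, j))
        = (fun i j : Fin dt' => ∑ k : Fin dt, ρ w' z (k, i) (k, j)))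
    (Y : Z → Fin (L + 1) → Matrix (Fin dt × Fin dt') (Fin dt × Fin dt') ℂ)
    (hY : ∀ z i, (Y z i).PosSemidef) (hYsum : ∀ z, ∑ i, Y z i = 1)
    (Perr : ℝ)
    (hPerr : Perr = 1 - ∑ z, q z * ((1 / (L : ℝ)) *
        (∑ w : Fin L, (ρ w z * Y z w.castSucc).trace).re)) :
    ∀ r ∈ Set.Ioo (0 : ℝ) 1,
      (1 - Perr) ^ ((1 : ℝ) + r) * (L : ℝ) ^ r ≤ (dt : ℝ) ^ (2 * r) := by
  intro r hr
  obtain ⟨hr0, hr1⟩ := hr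
  set w0 : Fin L := ⟨0, hL⟩ with hw0
  set T : Z → Matrix (Fin dt × Fin dt') (Fin dt × Fin dt') ℂ :=
    fun z => Matrix.of fun p q : Fin dt × Fin dt' =>
      if p.1 = q.1 then (dt : ℂ) * ∑ k, ρ w0 z (k, p.2) (k, q.2) else 0 with hT
  -- T z dominates every ρ w z
  have h1 : ∀ w z, (T z - ρ w z).PosSemidef := by
    intro w z
    have hp := pinch (hρ w z).1
    have heq : T z = Matrix.of fun p q : Fin dt × Fin dt' =>
        if p.1 = q.1 then (dt : ℂ) * ∑ k, ρ w z (k, p.2) (k, q.2) else 0 := by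
      ext p pq
      simp only [hT, Matrix.of_apply]
      by_cases h : p.1 = pq.1
      · rw [if_pos h, if_pos h]
        have := congrFun (congrFun (hsec w0 w z) p.2) pq.2
        rw [this]
      · rw [if_neg h, if_neg h]
    rw [heq]
    exact hp
  have hTpsd : ∀ z, (T z).PosSemidef := by
    intro z
    have := (h1 w0 z).add (hρ w0 z).1
    simpa using this
  have hTtrace : ∀ z, (T z).trace = ((dt : ℂ)) ^ 2 := by
    intro z
    have htr := (hρ w0 z).2
    rw [Matrix.trace] at htr ⊢
    simp only [Matrix.diag, Fintype.sum_prod_type, hT, Matrix.of_apply, if_pos rfl] at htr ⊢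
    rw [Finset.sum_comm] at htr
    calc ∑ k : Fin dt, ∑ i : Fin dt', (dt : ℂ) * ∑ m, ρ w0 z (m, i) (m, i)
        = ∑ _k : Fin dt, (dt : ℂ) * ∑ i : Fin dt', ∑ m, ρ w0 z (m, i) (m, i) := by
          exact Finset.sum_congr rfl fun k _ => (Finset.mul_sum _ _ _).symm
      _ = ∑ _k : Fin dt, (dt : ℂ) * 1 := by rw [htr]
      _ = ((dt : ℂ)) ^ 2 := by simp; ring
  -- summed success per z is at most dt²
  have hle1 : ∀ z, ∑ w : Fin L, (ρ w z * Y z w.castSucc).trace ≤ ((dt : ℂ)) ^ 2 := by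
    intro z
    calc ∑ w : Fin L, (ρ w z * Y z w.castSucc).trace
        ≤ ∑ w : Fin L, (T z * Y z w.castSucc).trace :=
          Finset.sum_le_sum fun w _ => trace_mul_le (h1 w z) (hY z w.castSucc)
      _ ≤ ∑ i : Fin (L + 1), (T z * Y z i).trace := by
          rw [Fin.sum_univ_castSucc]
          exact le_add_of_nonneg_right (trace_mul_nonneg (hTpsd z) (hY z (Fin.last L)))
      _ = (T z * ∑ i, Y z i).trace := by rw [Finset.mul_sum, Matrix.trace_sum]
      _ = (T z).trace := by rw [hYsum z, mul_one]
      _ = ((dt : ℂ)) ^ 2 := hTtrace z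
  -- each success term is at most 1
  have hle2 : ∀ z (w : Fin L), (ρ w z * Y z w.castSucc).trace ≤ 1 := by
    intro z w
    have hrest : ((1 : Matrix (Fin dt × Fin dt') (Fin dt × Fin dt') ℂ) - Y z w.castSucc).PosSemidef := by
      have hsum := Finset.sum_erase_add Finset.univ (Y z) (Finset.mem_univ w.castSucc)
      rw [hYsum z] at hsum
      have : (1 : Matrix (Fin dt × Fin dt') (Fin dt × Fin dt') ℂ) - Y z w.castSucc
          = ∑ i ∈ Finset.univ.erase w.castSucc, Y z i := by
        rw [← hsum, add_sub_cancel_right]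
      rw [this]
      exact psd_sum _ _ fun i _ => hY z i
    have h0 := trace_mul_nonneg (hρ w z).1 hrest
    rw [Matrix.mul_sub, Matrix.trace_sub, mul_one, (hρ w z).2] at h0
    exact sub_nonneg.mp h0
  have hge0 : ∀ z (w : Fin L), 0 ≤ (ρ w z * Y z w.castSucc).trace :=
    fun z w => trace_mul_nonneg (hρ w z).1 (hY z w.castSucc)
  -- pass to real parts
  set s : Z → ℝ := fun z => (∑ w : Fin L, (ρ w z * Y z w.castSucc).trace).re with hs
  have hs0 : ∀ z, 0 ≤ s z := by
    intro z
    have : (0 : ℂ) ≤ ∑ w : Fin L, (ρ w z * Y z w.castSucc).trace :=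
      Finset.sum_nonneg fun w _ => hge0 z w
    exact (Complex.le_def.mp this).1
  have hsL : ∀ z, s z ≤ (L : ℝ) := by
    intro z
    have hc : ∑ w : Fin L, (ρ w z * Y z w.castSucc).trace ≤ (L : ℂ) := by
      calc ∑ w : Fin L, (ρ w z * Y z w.castSucc).trace
          ≤ ∑ _w : Fin L, (1 : ℂ) := Finset.sum_le_sum fun w _ => hle2 z w
        _ = (L : ℂ) := by simp
    have h2 := (Complex.le_def.mp hc).1
    rw [Complex.natCast_re] at h2
    exact h2
  have hsdt : ∀ z, s z ≤ (dt : ℝ) ^ 2 := by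
    intro z
    have h2 := (Complex.le_def.mp (hle1 z)).1
    have h3 : (((dt : ℂ)) ^ 2).re = (dt : ℝ) ^ 2 := by
      rw [show ((dt : ℂ)) ^ 2 = (((dt ^ 2 : ℕ)) : ℂ) by push_cast; ring, Complex.natCast_re]
      push_cast
      ring
    rw [h3] at h2
    exact h2
  set S : ℝ := ∑ z, q z * ((1 / (L : ℝ)) * s z) with hSdef
  have hPS : 1 - Perr = S := by rw [hPerr]; ring
  have hLpos : (0 : ℝ) < (L : ℝ) := by exact_mod_cast hL
  have hS0 : 0 ≤ S := Finset.sum_nonneg fun z _ =>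
    mul_nonneg (hq z) (mul_nonneg (by positivity) (hs0 z))
  have hS1 : S ≤ 1 := by
    calc S ≤ ∑ z, q z * ((1 / (L : ℝ)) * (L : ℝ)) :=
          Finset.sum_le_sum fun z _ => mul_le_mul_of_nonneg_left
            (mul_le_mul_of_nonneg_left (hsL z) (by positivity)) (hq z)
      _ = ∑ z, q z := by
          refine Finset.sum_congr rfl fun z _ => ?_
          rw [one_div_mul_cancel (ne_of_gt hLpos), mul_one]
      _ = 1 := hqsum
  have hSL : S * (L : ℝ) ≤ (dt : ℝ) ^ 2 := by
    have : S ≤ (dt : ℝ) ^ 2 / (L : ℝ) := by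
      calc S ≤ ∑ z, q z * ((1 / (L : ℝ)) * ((dt : ℝ) ^ 2)) :=
            Finset.sum_le_sum fun z _ => mul_le_mul_of_nonneg_left
              (mul_le_mul_of_nonneg_left (hsdt z) (by positivity)) (hq z)
        _ = (dt : ℝ) ^ 2 / (L : ℝ) := by
            rw [← Finset.sum_mul, hqsum, one_mul]
            ring
    calc S * (L : ℝ) ≤ ((dt : ℝ) ^ 2 / (L : ℝ)) * (L : ℝ) :=
          mul_le_mul_of_nonneg_right this hLpos.le
      _ = (dt : ℝ) ^ 2 := by field_simp
  rw [hPS]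
  rcases eq_or_lt_of_le hS0 with h | h
  · rw [← h, Real.zero_rpow (by positivity), zero_mul]
    positivity
  · calc S ^ ((1 : ℝ) + r) * (L : ℝ) ^ r
        ≤ S ^ r * (L : ℝ) ^ r := by
          refine mul_le_mul_of_nonneg_right ?_ (Real.rpow_nonneg hLpos.le r)
          exact Real.rpow_le_rpow_of_exponent_ge h hS1 (by linarith)
      _ = (S * (L : ℝ)) ^ r := (Real.mul_rpow hS0 hLpos.le).symm
      _ ≤ ((dt : ℝ) ^ 2) ^ r := Real.rpow_le_rpow (by positivity) hSL hr0.le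
      _ = (dt : ℝ) ^ (2 * r) := by
          rw [← Real.rpow_natCast ((dt : ℝ)) 2, ← Real.rpow_mul (by positivity)]
          norm_num
end
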